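/- For every α ∈ (0,1) and A > 0 there exist a real number β with 0 < β ≤ α/16 and a constant R₂ = R₂(α,A) > 0 such that for every integer N ≥ 1, every u ∈ [−2+α, 2−α], every t₁, t₂ ∈ [−A,A], and every H ∈ ℝ, the following holds. Set v_i = (u+t_i/N)·d(H) for i = 1,2. If it is NOT the case that both |Im v₁| ≤ β and |Im v₂| ≤ β, and also NOT the case that both |Im v₁| ≥ β/2 and |Im v₂| ≥ β/2, then | N^{−1}·K̃_N( v₁, v₂, 1/N ) | ≤ (N−1)!·R₂^N·|H|^N. -/

import Mathlib

open Real

noncomputable section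

/-- The monic (probabilists') Hermite polynomial, evaluated at a complex number. -/
def hermiteH (k : ℕ) (z : ℂ) : ℂ := Polynomial.aeval z (Polynomial.hermite k)

/-- The normalized Hermite polynomial `p_k = H_k / ((2π)^{1/4} (k!)^{1/2})`. -/
def hermiteP (k : ℕ) (z : ℂ) : ℂ :=
  hermiteH k z / (((2 * π) ^ ((1:ℝ)/4) * Real.sqrt (Nat.factorial k) : ℝ) : ℂ)

/-- The Hermite function `φ_k(z) = p_k(z) exp(−z²/4)`. -/
def hermitePhi (k : ℕ) (z : ℂ) : ℂ := hermiteP k z * Complex.exp (-(z ^ 2) / 4)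

/-- The Hermite reproducing kernel `K_N(z₁,z₂) = Σ_{k<N} φ_k(z₁) φ_k(z₂)`. -/
def kernelK (N : ℕ) (z₁ z₂ : ℂ) : ℂ :=
  ∑ k ∈ Finset.range N, hermitePhi k z₁ * hermitePhi k z₂

/-- The rescaled kernel `K̃_N(z₁,z₂,s) = s^{−1/2} K_N(z₁ s^{−1/2}, z₂ s^{−1/2})`
(principal powers). -/
def kernelKt (N : ℕ) (z₁ z₂ s : ℂ) : ℂ :=
  s ^ (-(1:ℂ)/2) * kernelK N (z₁ * s ^ (-(1:ℂ)/2)) (z₂ * s ^ (-(1:ℂ)/2))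

/-- `d(H) = √(1+iH)`, the principal square root. -/
def dC (H : ℝ) : ℂ := (1 + H * Complex.I) ^ ((1:ℂ)/2)

/-- The closed strip `S̄_{α,β} = {z : |Re z| ≤ 2−α, |Im z| ≤ β}`. -/
def Sbar (α β : ℝ) : Set ℂ := {z : ℂ | |z.re| ≤ 2 - α ∧ |z.im| ≤ β}

/-- The Wigner semicircle density. -/
def wigner (x : ℝ) : ℝ := (2 * π)⁻¹ * Real.sqrt (4 - x ^ 2)

/-- The analytic continuation of the Wigner density,
`w(z) = (2π)⁻¹ (2−z)^{1/2} (2+z)^{1/2}` (principal powers). -/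
def wignerC (z : ℂ) : ℂ :=
  (((2 * π)⁻¹ : ℝ) : ℂ) * ((2 - z) ^ ((1:ℂ)/2) * (2 + z) ^ ((1:ℂ)/2))

lemma hermite_coeff_abs_le (n : ℕ) : ∀ k, |(Polynomial.hermite n).coeff k| ≤ (n.factorial : ℤ) := by
  induction n with
  | zero =>
    intro k
    simp only [Polynomial.hermite_zero, Polynomial.coeff_C, Nat.factorial_zero]
    split <;> simp
  | succ n ih =>
    intro k
    have hfac : (n.factorial : ℤ) ≤ ((n+1).factorial : ℤ) := by
      exact_mod_cast Nat.factorial_le (Nat.le_succ n)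
    match k with
    | 0 =>
      rw [Polynomial.coeff_hermite_succ_zero, abs_neg]
      exact le_trans (ih 1) hfac
    | k + 1 =>
      rw [Polynomial.coeff_hermite_succ_succ]
      by_cases h : n < k + 2
      · rw [Polynomial.coeff_hermite_of_lt h]
        simpa using le_trans (ih k) hfac
      · push_neg at h
        have h1 := ih k
        have h2 := ih (k + 2)
        have habs : |(Polynomial.hermite n).coeff k - (↑k + 2) * (Polynomial.hermite n).coeff (k+2)|
            ≤ |(Polynomial.hermite n).coeff k| + ((k:ℤ) + 2) * |(Polynomial.hermite n).coeff (k+2)| := by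
          calc _ ≤ |(Polynomial.hermite n).coeff k| + |(↑k + 2) * (Polynomial.hermite n).coeff (k+2)| :=
                abs_sub _ _
            _ = _ := by rw [abs_mul, abs_of_nonneg (by positivity : (0:ℤ) ≤ (k:ℤ)+2)]
        have hk2 : ((k:ℤ) + 2) ≤ n := by exact_mod_cast h
        have : ((n+1).factorial : ℤ) = ((n:ℤ)+1) * n.factorial := by
          rw [Nat.factorial_succ]; push_cast; ring
        rw [this]
        have hknn : (0:ℤ) ≤ (k:ℤ) + 2 := by positivity
        nlinarith [abs_nonneg ((Polynomial.hermite n).coeff (k+2)), (by exact_mod_cast Nat.factorial_pos n : (0:ℤ) < n.factorial)]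

lemma hermiteH_abs_le (n : ℕ) (z : ℂ) :
    ‖Polynomial.aeval z (Polynomial.hermite n)‖ ≤
      (n + 1) * n.factorial * (1 + ‖z‖) ^ n := by
  rw [Polynomial.aeval_eq_sum_range, Polynomial.natDegree_hermite]
  calc ‖∑ i ∈ Finset.range (n+1), (Polynomial.hermite n).coeff i • z ^ i‖
      ≤ ∑ i ∈ Finset.range (n+1), ‖(Polynomial.hermite n).coeff i • z ^ i‖ :=
        norm_sum_le _ _
    _ ≤ ∑ i ∈ Finset.range (n+1), (n.factorial : ℝ) * (1 + ‖z‖) ^ n := by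
        apply Finset.sum_le_sum
        intro i hi
        rw [Finset.mem_range, Nat.lt_succ_iff] at hi
        rw [zsmul_eq_mul, norm_mul, norm_pow, Complex.norm_intCast]
        have h1 : |((Polynomial.hermite n).coeff i : ℝ)| ≤ (n.factorial : ℝ) := by
          exact_mod_cast hermite_coeff_abs_le n i
        have h2 : ‖z‖ ^ i ≤ (1 + ‖z‖) ^ n := by
          calc ‖z‖ ^ i ≤ (1 + ‖z‖) ^ i := by
                apply pow_le_pow_left₀ (norm_nonneg z); linarith
            _ ≤ (1 + ‖z‖) ^ n := by
                apply pow_le_pow_right₀ _ hi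
                nlinarith [norm_nonneg z]
        have := norm_nonneg z
        apply mul_le_mul h1 h2 (by positivity) (by positivity)
    _ = (n + 1) * n.factorial * (1 + ‖z‖) ^ n := by
        rw [Finset.sum_const, Finset.card_range]; push_cast; ring

lemma base_ne (H : ℝ) : (1 + (H:ℂ) * Complex.I) ≠ 0 := by
  intro h
  have := congrArg Complex.re h
  simp at this

lemma dC_sq (H : ℝ) : dC H ^ 2 = 1 + H * Complex.I := by
  rw [dC, sq, ← Complex.cpow_add _ _ (base_ne H)]
  norm_num

lemma dC_im_sq_le (H : ℝ) : (dC H).im ^ 2 ≤ |H| / 2 := by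
  have h := dC_sq H
  have hre := congrArg Complex.re h
  have him := congrArg Complex.im h
  simp only [pow_two, Complex.mul_re, Complex.mul_im, Complex.add_re, Complex.add_im,
    Complex.one_re, Complex.one_im, Complex.mul_I_re, Complex.mul_I_im,
    Complex.ofReal_re, Complex.ofReal_im, Complex.I_re, Complex.I_im] at hre him
  ring_nf at hre him
  set a := (dC H).re
  set b := (dC H).im
  -- hre : a*a - b*b = 1, him : a*b + b*a = H
  have habs : H^2 = |H|^2 := (sq_abs H).symm
  have hH2 : |H|^2 = 4*b^2 + 4*b^4 := by linear_combination (-1:ℝ)*habs - (a*b*2+H)*him + 4*b^2*hre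
  nlinarith [abs_nonneg H, sq_nonneg b, sq_nonneg (b^2)]

lemma dC_abs_sq (H : ℝ) : ‖dC H‖ ^ 2 ≤ 1 + |H| := by
  have : ‖dC H‖ ^ 2 = ‖dC H ^ 2‖ := (norm_pow _ _).symm
  rw [this, dC_sq]
  have h1 : ‖1 + (H:ℂ) * Complex.I‖ = Real.sqrt (1 + H^2) := by
    rw [Complex.norm_def, Complex.normSq_apply]
    simp [Complex.add_re, Complex.add_im, Complex.mul_I_re, Complex.mul_I_im]
    ring_nf
  rw [h1]
  have h2 : (1 : ℝ) + H^2 ≤ (1 + |H|)^2 := by nlinarith [abs_nonneg H, sq_abs H]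
  calc Real.sqrt (1 + H^2) ≤ Real.sqrt ((1+|H|)^2) := Real.sqrt_le_sqrt h2
    _ = 1 + |H| := Real.sqrt_sq (by positivity)

lemma key_real (β A n ca cb b : ℝ) (hβ : 0 < β) (hA : 0 < A) (hn : 1 ≤ n)
    (hdiff : |ca - cb| ≤ 2*A/n) (h1 : β < |ca| * |b|) (h2 : |cb| * |b| < β/2) :
    |ca| ≤ 4*A/n ∧ |cb| ≤ 4*A/n ∧ β * n ≤ 4*A*|b| := by
  have hn0 : 0 < n := by linarith
  have hb : 0 < |b| := by
    rcases (abs_nonneg b).lt_or_eq with h | h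
    · exact h
    · exfalso; rw [← h] at h1; nlinarith [abs_nonneg ca]
  have hcb : |cb| < |ca| / 2 := by
    have := mul_lt_mul_of_pos_right (show |cb| < |ca|/2 by nlinarith) hb
    nlinarith
  have htri : |ca| - |cb| ≤ |ca - cb| := by
    have := abs_sub_abs_le_abs_sub ca cb
    linarith
  have heq : 4*A/n = 2*(2*A/n) := by ring
  have hca : |ca| ≤ 4*A/n := by
    have h4 : |ca| / 2 ≤ 2*A/n := by linarith
    rw [heq]; linarith
  have hpos : 0 ≤ 2*A/n := by positivity
  refine ⟨hca, by rw [heq]; linarith, ?_⟩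
  have : β < (4*A/n) * |b| := by
    calc β < |ca| * |b| := h1
      _ ≤ (4*A/n) * |b| := by apply mul_le_mul_of_nonneg_right hca (le_of_lt hb)
  rw [div_mul_eq_mul_div, lt_div_iff₀ hn0] at this
  nlinarith

lemma hermitePhi_abs_le (k : ℕ) (z : ℂ) (hz : 0 ≤ (z ^ 2).re) :
    ‖hermitePhi k z‖ ≤
      (k + 1) * Real.sqrt k.factorial * (1 + ‖z‖) ^ k := by
  have hsq : (0:ℝ) < Real.sqrt k.factorial := Real.sqrt_pos.mpr (by exact_mod_cast Nat.factorial_pos k)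
  have h2pi : (1:ℝ) ≤ (2 * π) ^ ((1:ℝ)/4) := by
    apply Real.one_le_rpow (by nlinarith [Real.pi_gt_three]) (by norm_num)
  have hexp : ‖Complex.exp (-(z ^ 2) / 4)‖ ≤ 1 := by
    rw [Complex.norm_exp]
    have : (-(z ^ 2) / 4).re = -(z ^ 2).re / 4 := by
      have : -(z ^ 2) / 4 = ((1/4 : ℝ) : ℂ) * (-(z^2)) := by push_cast; ring
      rw [this, Complex.re_ofReal_mul]
      simp; ring
    rw [this]
    exact Real.exp_le_one_iff.mpr (by linarith)
  have hP : ‖hermiteP k z‖ ≤ (k + 1) * Real.sqrt k.factorial * (1 + ‖z‖) ^ k := by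
    rw [hermiteP, norm_div, Complex.norm_real, Real.norm_eq_abs]
    rw [abs_of_nonneg (by positivity)]
    rw [div_le_iff₀ (by positivity)]
    calc ‖hermiteH k z‖ ≤ (k + 1) * k.factorial * (1 + ‖z‖) ^ k :=
          hermiteH_abs_le k z
      _ = ((k:ℝ) + 1) * Real.sqrt k.factorial * (1 + ‖z‖) ^ k * (1 * Real.sqrt k.factorial) := by
          have hS : Real.sqrt k.factorial * Real.sqrt k.factorial = (k.factorial:ℝ) :=
            Real.mul_self_sqrt (by positivity)
          linear_combination (((k:ℝ) + 1) * (1 + ‖z‖) ^ k) * hS.symm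
      _ ≤ (k + 1) * Real.sqrt k.factorial * (1 + ‖z‖) ^ k * ((2 * π) ^ ((1:ℝ)/4) * Real.sqrt k.factorial) := by
          apply mul_le_mul_of_nonneg_left
          · apply mul_le_mul_of_nonneg_right h2pi (le_of_lt hsq)
          · have := norm_nonneg z
            positivity
  calc ‖hermitePhi k z‖ = ‖hermiteP k z‖ * ‖Complex.exp (-(z ^ 2) / 4)‖ := norm_mul _ _
    _ ≤ ((k + 1) * Real.sqrt k.factorial * (1 + ‖z‖) ^ k) * 1 := by
        apply mul_le_mul hP hexp (norm_nonneg _) (by positivity)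
    _ = _ := mul_one _

set_option maxHeartbeats 1000000 in
theorem kernel_bound_mixed :
    ∀ α ∈ Set.Ioo (0:ℝ) 1, ∀ A : ℝ, 0 < A →
      ∃ β : ℝ, 0 < β ∧ β ≤ α/16 ∧ ∃ R₂ : ℝ, 0 < R₂ ∧
        ∀ N : ℕ, 1 ≤ N → ∀ u ∈ Set.Icc (-2 + α) (2 - α),
          ∀ t₁ ∈ Set.Icc (-A) A, ∀ t₂ ∈ Set.Icc (-A) A, ∀ H : ℝ,
            ¬(|(((u + t₁ / N : ℝ) : ℂ) * dC H).im| ≤ β ∧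
              |(((u + t₂ / N : ℝ) : ℂ) * dC H).im| ≤ β) →
            ¬(β/2 ≤ |(((u + t₁ / N : ℝ) : ℂ) * dC H).im| ∧
              β/2 ≤ |(((u + t₂ / N : ℝ) : ℂ) * dC H).im|) →
            ‖(N : ℂ)⁻¹ *
                kernelKt N (((u + t₁ / N : ℝ) : ℂ) * dC H)
                  (((u + t₂ / N : ℝ) : ℂ) * dC H) ((N : ℂ)⁻¹)‖ ≤
              (Nat.factorial (N - 1)) * R₂ ^ N * |H| ^ N := by
  intro α hα A hA
  obtain ⟨hα0, hα1⟩ := hα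
  set β := α / 16 with hβdef
  have hβ : 0 < β := by positivity
  set G := 8 * A^2 / β^2 with hGdef
  have hG : 0 < G := by positivity
  set L := 16 * A^2 * (G + 1) with hLdef
  have hL : 0 < L := by positivity
  set P := (Real.sqrt G + Real.sqrt L)^2 with hPdef
  have hP : 0 < P := by positivity
  set R := (1 + G) * (1 + P) with hRdef
  have hR : 0 < R := by positivity
  have hGR : G ≤ R := by rw [hRdef]; nlinarith
  have hPR : P ≤ R := by rw [hRdef]; nlinarith
  clear_value β G L P R
  refine ⟨β, hβ, le_refl _, R, hR, ?_⟩
  intro N hN u hu t₁ ht₁ t₂ ht₂ H hyp1 hyp2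
  obtain ⟨M, rfl⟩ : ∃ M, N = M + 1 := ⟨N - 1, (Nat.succ_pred_eq_of_pos hN).symm⟩
  simp only [kernelKt, Nat.add_sub_cancel]
  set n := ((M + 1 : ℕ) : ℝ) with hndef
  have hn1 : 1 ≤ n := by rw [hndef]; exact_mod_cast hN
  have hn0 : 0 < n := by linarith
  set c₁ := u + t₁ / n with hc₁
  set c₂ := u + t₂ / n with hc₂
  set b := (dC H).im with hbdef
  set s : ℂ := ((M + 1 : ℕ) : ℂ)⁻¹ with hsdef
  set q : ℂ := s ^ (-(1:ℂ)/2) with hqdef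
  set z₁ : ℂ := ((c₁ : ℝ) : ℂ) * dC H * q with hz₁
  set z₂ : ℂ := ((c₂ : ℝ) : ℂ) * dC H * q with hz₂
  clear_value s q z₁ z₂
  -- hypothesis processing
  have him1 : (((c₁ : ℝ) : ℂ) * dC H).im = c₁ * b := Complex.im_ofReal_mul _ _
  have him2 : (((c₂ : ℝ) : ℂ) * dC H).im = c₂ * b := Complex.im_ofReal_mul _ _
  rw [him1, him2] at hyp1 hyp2
  simp only [abs_mul] at hyp1 hyp2
  rw [not_and_or] at hyp1 hyp2
  push_neg at hyp1 hyp2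
  have hdiff : |c₁ - c₂| ≤ 2 * A / n := by
    have h12 : c₁ - c₂ = (t₁ - t₂) / n := by rw [hc₁, hc₂]; ring
    rw [h12, abs_div, abs_of_pos hn0, div_le_div_iff₀ hn0 hn0]
    have h1 := ht₁.1; have h2 := ht₁.2; have h3 := ht₂.1; have h4 := ht₂.2
    have : |t₁ - t₂| ≤ 2 * A := abs_le.mpr ⟨by linarith, by linarith⟩
    nlinarith
  have hdiff' : |c₂ - c₁| ≤ 2*A/n := by rwa [abs_sub_comm]
  have hkey : |c₁| ≤ 4*A/n ∧ |c₂| ≤ 4*A/n ∧ β * n ≤ 4*A*|b| := by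
    rcases hyp1 with h1 | h1 <;> rcases hyp2 with h2 | h2
    · exact absurd h1 (by linarith)
    · exact key_real β A n c₁ c₂ b hβ hA hn1 hdiff h1 h2
    · obtain ⟨ha, hb', hc⟩ := key_real β A n c₂ c₁ b hβ hA hn1 hdiff' h1 h2
      exact ⟨hb', ha, hc⟩
    · exact absurd h1 (by linarith)
  obtain ⟨hca, hcb, hbn⟩ := hkey
  clear_value n c₁ c₂ b
  clear hyp1 hyp2 him1 him2 hdiff hdiff'
  -- |H| lower bound
  have hGH : n^2 ≤ G * |H| := by
    have hb2 : b^2 ≤ |H|/2 := by rw [hbdef]; exact dC_im_sq_le H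
    have h1 : β^2 * n^2 ≤ 8 * A^2 * |H| := by
      have hbn0 : (0:ℝ) ≤ β * n := le_of_lt (mul_pos hβ hn0)
      have hsq : β*n*(β*n) ≤ (4*A*|b|)*(4*A*|b|) :=
        mul_le_mul hbn hbn hbn0 (by positivity)
      nlinarith [hsq, sq_abs b]
    rw [hGdef, div_mul_eq_mul_div, le_div_iff₀ (by positivity : (0:ℝ) < β^2)]
    nlinarith
  have hHpos : 0 < |H| := by nlinarith
  have h1GH : 1 ≤ G * |H| := by nlinarith
  -- cpow facts
  have hNC : ((M + 1 : ℕ) : ℂ) ≠ 0 := Nat.cast_ne_zero.mpr (by omega)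
  have hqq : q * q = ((M + 1 : ℕ) : ℂ) := by
    rw [hqdef, hsdef, ← Complex.cpow_add _ _ (inv_ne_zero hNC),
      show (-(1:ℂ)/2 + -(1:ℂ)/2) = -1 by ring, Complex.cpow_neg_one, inv_inv]
  have haqq : ‖q‖ * ‖q‖ = n := by
    rw [← norm_mul, hqq, Complex.norm_natCast, hndef]
  have habsq : ‖q‖ ≤ n := by
    nlinarith [norm_nonneg q]
  -- real parts of squares
  have hz2 : ∀ c : ℝ, ((((c : ℝ) : ℂ) * dC H * q)^2).re = c^2 * n := by
    intro c
    have he : (((c : ℝ) : ℂ) * dC H * q)^2 = ((c^2 * n : ℝ) : ℂ) * (1 + H * Complex.I) := by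
      rw [mul_pow, mul_pow, dC_sq, sq q, hqq, hndef]
      push_cast
      ring
    rw [he, Complex.re_ofReal_mul]
    simp
  have hre1 : 0 ≤ (z₁^2).re := by rw [hz₁, hz2]; positivity
  have hre2 : 0 ≤ (z₂^2).re := by rw [hz₂, hz2]; positivity
  -- bounds on |z_i|
  set w₁ := ‖z₁‖ with hw₁
  set w₂ := ‖z₂‖ with hw₂
  have hw1n : 0 ≤ w₁ := norm_nonneg z₁
  have hw2n : 0 ≤ w₂ := norm_nonneg z₂
  have habsz : ∀ (c : ℝ), |c| ≤ 4*A/n →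
      ‖((c : ℝ) : ℂ) * dC H * q‖ ^ 2 ≤ L * |H| / n := by
    intro c hc
    rw [norm_mul, norm_mul, Complex.norm_real, Real.norm_eq_abs]
    have had : ‖dC H‖ ^ 2 ≤ (G + 1) * |H| := by
      have := dC_abs_sq H
      nlinarith
    have h1 : (|c| * ‖dC H‖ * ‖q‖)^2
        = |c|^2 * ‖dC H‖^2 * n := by
      rw [mul_pow, mul_pow, sq (‖q‖), haqq]
    rw [h1]
    have hc2 : |c|^2 ≤ (4*A/n)^2 := by
      apply pow_le_pow_left₀ (abs_nonneg c) hc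
    calc |c|^2 * ‖dC H‖^2 * n ≤ (4*A/n)^2 * ((G+1)*|H|) * n := by
          apply mul_le_mul_of_nonneg_right _ (le_of_lt hn0)
          apply mul_le_mul hc2 had (by positivity) (by positivity)
      _ = L * |H| / n := by rw [hLdef]; field_simp; ring
  have hw1sq : w₁^2 ≤ L * |H| / n := by rw [hw₁, hz₁]; exact habsz c₁ hca
  have hw2sq : w₂^2 ≤ L * |H| / n := by rw [hw₂, hz₂]; exact habsz c₂ hcb
  clear_value w₁ w₂
  clear habsz
  -- 1 + w_i ≤ (√G + √L) √(|H|/n)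
  set T := Real.sqrt (|H| / n) with hTdef
  have hone : 1 ≤ Real.sqrt G * T := by
    have h1 : (1:ℝ) ≤ G * (|H|/n) := by
      rw [← mul_div_assoc, le_div_iff₀ hn0]
      nlinarith
    calc (1:ℝ) = Real.sqrt 1 := Real.sqrt_one.symm
      _ ≤ Real.sqrt (G * (|H|/n)) := Real.sqrt_le_sqrt h1
      _ = Real.sqrt G * T := by rw [Real.sqrt_mul (le_of_lt hG)]
  have hwle : ∀ w : ℝ, 0 ≤ w → w^2 ≤ L * |H| / n → w ≤ Real.sqrt L * T := by
    intro w hw hwsq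
    calc w = Real.sqrt (w^2) := (Real.sqrt_sq hw).symm
      _ ≤ Real.sqrt (L * (|H|/n)) := Real.sqrt_le_sqrt (by rw [← mul_div_assoc]; exact hwsq)
      _ = Real.sqrt L * T := by rw [Real.sqrt_mul (le_of_lt hL)]
  have hw1le : 1 + w₁ ≤ (Real.sqrt G + Real.sqrt L) * T := by
    have := hwle w₁ hw1n hw1sq
    rw [add_mul]; linarith
  have hw2le : 1 + w₂ ≤ (Real.sqrt G + Real.sqrt L) * T := by
    have := hwle w₂ hw2n hw2sq
    rw [add_mul]; linarith
  set W := (1 + w₁) * (1 + w₂) with hWdef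
  have hW1 : 1 ≤ W := by nlinarith
  have hW0 : 0 ≤ W := by linarith
  have hT2 : T^2 = |H|/n := Real.sq_sqrt (by positivity)
  have hWle : W * n ≤ P * |H| := by
    have h0 : 0 ≤ (Real.sqrt G + Real.sqrt L) * T := by positivity
    have hWP : W ≤ P * (|H|/n) := by
      calc W ≤ ((Real.sqrt G + Real.sqrt L) * T) * ((Real.sqrt G + Real.sqrt L) * T) := by
            apply mul_le_mul hw1le hw2le (by linarith) h0
        _ = P * T^2 := by rw [hPdef]; ring
        _ = P * (|H|/n) := by rw [hT2]
    calc W * n ≤ (P * (|H|/n)) * n := mul_le_mul_of_nonneg_right hWP (le_of_lt hn0)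
      _ = P * |H| := by field_simp
  clear_value T W
  -- term bound
  have hterm : ∀ k ∈ Finset.range (M + 1),
      ‖hermitePhi k z₁ * hermitePhi k z₂‖ ≤ n^2 * (M.factorial : ℝ) * W^M := by
    intro k hk
    rw [Finset.mem_range] at hk
    have hkM : k ≤ M := by omega
    have h1 := hermitePhi_abs_le k z₁ hre1
    have h2 := hermitePhi_abs_le k z₂ hre2
    rw [← hw₁] at h1
    rw [← hw₂] at h2
    have hsk : (0:ℝ) ≤ Real.sqrt k.factorial := Real.sqrt_nonneg _
    have hb1 : (0:ℝ) ≤ (k + 1) * Real.sqrt k.factorial * (1 + w₁) ^ k := by positivity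
    rw [norm_mul]
    calc ‖hermitePhi k z₁‖ * ‖hermitePhi k z₂‖
        ≤ ((k + 1) * Real.sqrt k.factorial * (1 + w₁) ^ k) *
          ((k + 1) * Real.sqrt k.factorial * (1 + w₂) ^ k) := by
          apply mul_le_mul h1 h2 (norm_nonneg _) hb1
      _ = ((k:ℝ) + 1)^2 * (Real.sqrt k.factorial * Real.sqrt k.factorial) * W^k := by
          rw [hWdef, mul_pow]; ring
      _ = ((k:ℝ) + 1)^2 * (k.factorial : ℝ) * W^k := by
          rw [Real.mul_self_sqrt (by positivity)]
      _ ≤ n^2 * (M.factorial : ℝ) * W^M := by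
          have e1 : ((k:ℝ) + 1)^2 ≤ n^2 := by
            apply pow_le_pow_left₀ (by positivity)
            have : (k:ℝ) ≤ (M:ℝ) := by exact_mod_cast hkM
            rw [hndef]; push_cast; linarith
          have e2 : (k.factorial : ℝ) ≤ (M.factorial : ℝ) :=
            Nat.cast_le.mpr (Nat.factorial_le hkM)
          have e3 : W^k ≤ W^M := pow_le_pow_right₀ hW1 hkM
          have p1 : (0:ℝ) ≤ ((k:ℝ)+1)^2 := by positivity
          have p2 : (0:ℝ) ≤ (k.factorial : ℝ) := by positivity
          have p3 : (0:ℝ) ≤ W^k := pow_nonneg hW0 k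
          have p4 : (0:ℝ) ≤ n^2 := by positivity
          apply mul_le_mul (mul_le_mul e1 e2 p2 p4) e3 p3 (by positivity)
  -- kernel bound
  have hK : ‖kernelK (M+1) z₁ z₂‖ ≤ n * (n^2 * (M.factorial : ℝ) * W^M) := by
    rw [kernelK]
    calc ‖∑ k ∈ Finset.range (M+1), hermitePhi k z₁ * hermitePhi k z₂‖
        ≤ ∑ k ∈ Finset.range (M+1), ‖hermitePhi k z₁ * hermitePhi k z₂‖ :=
          norm_sum_le _ _
      _ ≤ ∑ _k ∈ Finset.range (M+1), n^2 * (M.factorial : ℝ) * W^M :=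
          Finset.sum_le_sum hterm
      _ = n * (n^2 * (M.factorial : ℝ) * W^M) := by
          rw [Finset.sum_const, Finset.card_range, nsmul_eq_mul, hndef]
  -- assemble
  have habsinv : ‖s‖ = n⁻¹ := by
    rw [hsdef, norm_inv, Complex.norm_natCast, hndef]
  rw [norm_mul, norm_mul, habsinv]
  have hfinal : n⁻¹ * (‖q‖ * ‖kernelK (M+1) z₁ z₂‖)
      ≤ n^3 * (M.factorial : ℝ) * W^M := by
    have h1 : ‖q‖ * ‖kernelK (M+1) z₁ z₂‖
        ≤ n * (n * (n^2 * (M.factorial : ℝ) * W^M)) := by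
      apply mul_le_mul habsq hK (norm_nonneg _) (by linarith)
    have h2 : n⁻¹ * (‖q‖ * ‖kernelK (M+1) z₁ z₂‖)
        ≤ n⁻¹ * (n * (n * (n^2 * (M.factorial : ℝ) * W^M))) := by
      apply mul_le_mul_of_nonneg_left h1 (by positivity)
    calc n⁻¹ * (‖q‖ * ‖kernelK (M+1) z₁ z₂‖)
        ≤ n⁻¹ * (n * (n * (n^2 * (M.factorial : ℝ) * W^M))) := h2
      _ = n^3 * (M.factorial : ℝ) * W^M := by field_simp
  -- final numeric estimate
  have hnM : n ≤ n^M := by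
    rcases Nat.eq_zero_or_pos M with hM | hM
    · subst hM; rw [hndef]; norm_num
    · calc n = n^1 := (pow_one n).symm
        _ ≤ n^M := pow_le_pow_right₀ hn1 hM
  have hn2R : n^2 ≤ R * |H| := by
    have := mul_le_mul_of_nonneg_right hGR (le_of_lt hHpos)
    linarith
  have hkey2 : n^3 * W^M * n^M ≤ R^(M+1) * |H|^(M+1) * n^M := by
    calc n^3 * W^M * n^M = n^2 * n * (W*n)^M := by rw [mul_pow]; ring
      _ ≤ (R*|H|) * n^M * ((R*|H|)^M) := by
          have hWR : W * n ≤ R * |H| := by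
            have := mul_le_mul_of_nonneg_right hPR (abs_nonneg H)
            linarith
          have e3 : (W*n)^M ≤ (R*|H|)^M := by
            apply pow_le_pow_left₀ (by positivity) hWR
          apply mul_le_mul (mul_le_mul hn2R hnM (by linarith) (by positivity)) e3
            (pow_nonneg (by positivity) M) (by positivity)
      _ = R^(M+1) * |H|^(M+1) * n^M := by
          rw [mul_pow, pow_succ, pow_succ]; ring
  have hkey3 : n^3 * W^M ≤ R^(M+1) * |H|^(M+1) :=
    le_of_mul_le_mul_right hkey2 (pow_pos hn0 M)
  calc n⁻¹ * (‖q‖ * ‖kernelK (M+1) z₁ z₂‖)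
      ≤ n^3 * (M.factorial : ℝ) * W^M := hfinal
    _ = (M.factorial : ℝ) * (n^3 * W^M) := by ring
    _ ≤ (M.factorial : ℝ) * (R^(M+1) * |H|^(M+1)) := by
        apply mul_le_mul_of_nonneg_left hkey3 (by positivity)
    _ = (M.factorial : ℝ) * R^(M+1) * |H|^(M+1) := by ring

end
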